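/- Consider the vector field F with parameters (α, Ω, I) = (3, 1, 2√2). Then the point (x,y) = (−√2, √2) satisfies F(x,y) = (0,0), and the matrix J(x,y) has trace 0 and determinant 0. Likewise, for parameters (α, Ω, I) = (3, 5/16, 5√2/64), the point (x,y) = (√2/8, √2/8) satisfies F(x,y) = (0,0), and the matrix J(x,y) has trace 0 and determinant 0. -/

import Mathlib

/-- `g(x,y) = −1 + α√(x²+y²) − (x²+y²)`. -/
noncomputable def gRIC (α x y : ℝ) : ℝ :=
  -1 + α * Real.sqrt (x ^ 2 + y ^ 2) - (x ^ 2 + y ^ 2)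

/-- `h(x,y) = α/√(x²+y²) − 2`. -/
noncomputable def hRIC (α x y : ℝ) : ℝ :=
  α / Real.sqrt (x ^ 2 + y ^ 2) - 2

/-- The planar vector field `F(x,y) = (g·x − Ω·y + I, g·y + Ω·x)`. -/
noncomputable def FRIC (α Ω I x y : ℝ) : ℝ × ℝ :=
  (gRIC α x y * x - Ω * y + I, gRIC α x y * y + Ω * x)

/-- The Jacobian matrix of `F` at `(x,y)`. -/
noncomputable def JRIC (α Ω x y : ℝ) : Matrix (Fin 2) (Fin 2) ℝ :=
  !![gRIC α x y + x ^ 2 * hRIC α x y, x * y * hRIC α x y - Ω;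
     x * y * hRIC α x y + Ω, gRIC α x y + y ^ 2 * hRIC α x y]

/-!
On the circle `x² + y² = r²` (with `r > 0`) one has `g = -1 + α r - r²` and `r² h = α r - 2 r²`,
and for a matrix of the form `g • 1 + h • v vᵀ + Ω • (rotation)` the trace is `2 g + r² h` and the
determinant is `g (g + r² h) + Ω²`. Hence both Bogdanov–Takens conditions only depend on the
radius: `tr J = -2 + 3 α r - 4 r²` vanishes for `α = 3` at `r = 2` and `r = 1/4`, and then
`det J = 0` fixes `Ω² = -g (g + r² h)`, i.e. `Ω = 1` resp. `Ω = 5/16`. The equilibrium equations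
are linear in `(x, y, I)` once `g` is known.
-/

theorem trace_JRIC (α Ω x y : ℝ) :
    (JRIC α Ω x y).trace = 2 * gRIC α x y + (x ^ 2 + y ^ 2) * hRIC α x y := by
  rw [JRIC, Matrix.trace_fin_two_of]
  ring

theorem det_JRIC (α Ω x y : ℝ) :
    (JRIC α Ω x y).det =
      gRIC α x y * (gRIC α x y + (x ^ 2 + y ^ 2) * hRIC α x y) + Ω ^ 2 := by
  rw [JRIC, Matrix.det_fin_two_of]
  ring

section Polar

variable {α Ω I x y r : ℝ}

theorem sq_add_sq_eq_of_sqrt_eq (hr : √(x ^ 2 + y ^ 2) = r) : x ^ 2 + y ^ 2 = r ^ 2 := by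
  rw [← hr, Real.sq_sqrt (by positivity)]

theorem gRIC_eq_of_sqrt_eq (hr : √(x ^ 2 + y ^ 2) = r) :
    gRIC α x y = -1 + α * r - r ^ 2 := by
  rw [gRIC, hr, sq_add_sq_eq_of_sqrt_eq hr]

theorem sq_add_sq_mul_hRIC_eq_of_sqrt_eq (hr : √(x ^ 2 + y ^ 2) = r) (hr0 : r ≠ 0) :
    (x ^ 2 + y ^ 2) * hRIC α x y = α * r - 2 * r ^ 2 := by
  rw [hRIC, hr, sq_add_sq_eq_of_sqrt_eq hr]
  field_simp

theorem FRIC_eq_of_sqrt_eq (hr : √(x ^ 2 + y ^ 2) = r) :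
    FRIC α Ω I x y =
      ((-1 + α * r - r ^ 2) * x - Ω * y + I, (-1 + α * r - r ^ 2) * y + Ω * x) := by
  rw [FRIC, gRIC_eq_of_sqrt_eq hr]

theorem trace_JRIC_eq_of_sqrt_eq (hr : √(x ^ 2 + y ^ 2) = r) (hr0 : r ≠ 0) :
    (JRIC α Ω x y).trace = -2 + 3 * α * r - 4 * r ^ 2 := by
  rw [trace_JRIC, gRIC_eq_of_sqrt_eq hr, sq_add_sq_mul_hRIC_eq_of_sqrt_eq hr hr0]
  ring

theorem det_JRIC_eq_of_sqrt_eq (hr : √(x ^ 2 + y ^ 2) = r) (hr0 : r ≠ 0) :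
    (JRIC α Ω x y).det = (-1 + α * r - r ^ 2) * (-1 + 2 * α * r - 3 * r ^ 2) + Ω ^ 2 := by
  rw [det_JRIC, gRIC_eq_of_sqrt_eq hr, sq_add_sq_mul_hRIC_eq_of_sqrt_eq hr hr0]
  ring

end Polar

theorem bogdanov_takens_points_alpha_three :
    (FRIC 3 1 (2 * Real.sqrt 2) (-Real.sqrt 2) (Real.sqrt 2) = (0, 0) ∧
      Matrix.trace (JRIC 3 1 (-Real.sqrt 2) (Real.sqrt 2)) = 0 ∧
      (JRIC 3 1 (-Real.sqrt 2) (Real.sqrt 2)).det = 0) ∧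
    (FRIC 3 (5 / 16) (5 * Real.sqrt 2 / 64) (Real.sqrt 2 / 8) (Real.sqrt 2 / 8) = (0, 0) ∧
      Matrix.trace (JRIC 3 (5 / 16) (Real.sqrt 2 / 8) (Real.sqrt 2 / 8)) = 0 ∧
      (JRIC 3 (5 / 16) (Real.sqrt 2 / 8) (Real.sqrt 2 / 8)).det = 0) := by
  have hs : √2 ^ 2 = 2 := Real.sq_sqrt zero_le_two
  have hr₁ : √((-√2) ^ 2 + √2 ^ 2) = 2 :=
    (Real.sqrt_eq_iff_eq_sq (by positivity) zero_le_two).2 (by rw [neg_sq, hs]; norm_num)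
  have hr₂ : √((√2 / 8) ^ 2 + (√2 / 8) ^ 2) = 1 / 4 :=
    (Real.sqrt_eq_iff_eq_sq (by positivity) (by norm_num)).2 (by rw [div_pow, hs]; norm_num)
  rw [FRIC_eq_of_sqrt_eq hr₁, trace_JRIC_eq_of_sqrt_eq hr₁ two_ne_zero,
    det_JRIC_eq_of_sqrt_eq hr₁ two_ne_zero, FRIC_eq_of_sqrt_eq hr₂,
    trace_JRIC_eq_of_sqrt_eq hr₂ (by norm_num), det_JRIC_eq_of_sqrt_eq hr₂ (by norm_num)]
  norm_num [Prod.ext_iff]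
  constructor <;> ring_nf
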